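/- Let S be a semilattice, A an S-graded C*-algebra, and M an S-graded Hilbert A-module. Then the imprimitivity algebra K(M) is an S-graded C*-algebra with components K(M)(σ) = K(M(σ)), the closed span in K(M) of operators MM* with M ∈ M(σ): these subalgebras are linearly independent, their sum is dense in K(M), and K(M)(σ)K(M)(τ) ⊆ K(M)(σ∧τ). -/

import Mathlib

open ContinuousLinearMap

variable {S : Type*} [SemilatticeInf S]
  {E F : Type*} [NormedAddCommGroup E] [InnerProductSpace ℂ E] [CompleteSpace E]
  [NormedAddCommGroup F] [InnerProductSpace ℂ F] [CompleteSpace F]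

/-- `K(M(σ))`: the closed span in `L(F)` of the operators `m n*` with `m, n ∈ M(σ)`. -/
noncomputable def Ksig (M : S → Submodule ℂ (E →L[ℂ] F)) (σ : S) : Set (F →L[ℂ] F) :=
  closure (↑(Submodule.span ℂ
    {x : F →L[ℂ] F | ∃ m ∈ M σ, ∃ n ∈ M σ, x = m ∘L (adjoint n)}) : Set (F →L[ℂ] F))

/-- `K(M)`: the closed span in `L(F)` of all operators `m n*` with `m, n` in components
of the graded module `M`. -/
noncomputable def Kall (M : S → Submodule ℂ (E →L[ℂ] F)) : Set (F →L[ℂ] F) :=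
  closure (↑(Submodule.span ℂ
    {x : F →L[ℂ] F | ∃ σ τ, ∃ m ∈ M σ, ∃ n ∈ M τ, x = m ∘L (adjoint n)}) :
    Set (F →L[ℂ] F))

section Helpers

open Polynomial

lemma pow_bound {ε : ℝ} (hε : 0 < ε) : ∃ n : ℕ, ∀ u ∈ Set.Icc (0:ℝ) 1, u * (1-u)^n ≤ ε := by
  set δ := min ε 1 with hδdef
  have hδ : 0 < δ := lt_min hε one_pos
  have hδ1 : δ ≤ 1 := min_le_right _ _
  have hδε : δ ≤ ε := min_le_left _ _
  obtain ⟨n, hn⟩ := exists_pow_lt_of_lt_one hδ (show (1:ℝ) - δ < 1 by linarith)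
  refine ⟨n, fun u hu => ?_⟩
  obtain ⟨hu0, hu1⟩ := hu
  rcases le_or_gt u δ with h | h
  · calc u * (1-u)^n ≤ u * 1 := by
          refine mul_le_mul_of_nonneg_left ?_ hu0
          exact pow_le_one₀ (by linarith) (by linarith)
        _ ≤ ε := by linarith
  · have h2 : (1-u)^n ≤ (1-δ)^n := by
      refine pow_le_pow_left₀ (by linarith) (by linarith) n
    calc u * (1-u)^n ≤ 1 * (1-δ)^n := by
          refine mul_le_mul hu1 h2 (pow_nonneg (by linarith) n) one_pos.le
      _ ≤ ε := by rw [one_mul]; linarith [hn]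

lemma adj_comp_self_sa (T : E →L[ℂ] F) : IsSelfAdjoint (adjoint T ∘L T) := by
  rw [ContinuousLinearMap.isSelfAdjoint_iff', adjoint_comp, adjoint_adjoint]

lemma aeval_sa (a : E →L[ℂ] E) (ha : IsSelfAdjoint a) (q : Polynomial ℝ) :
    IsSelfAdjoint (Polynomial.aeval a q) := by
  rw [← cfc_polynomial q a ha]; exact cfc_predicate _ _

/-- The key analytic approximation: `T` is approximated in norm by `T ∘ h(T*T)` for real
polynomials `h` without constant term. -/
lemma approx (T : E →L[ℂ] F) {ε : ℝ} (hε : 0 < ε) :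
    ∃ h : Polynomial ℝ, h.coeff 0 = 0 ∧
      ‖T - T ∘L (Polynomial.aeval (adjoint T ∘L T) h)‖ < ε := by
  classical
  by_cases hT : T = 0
  · exact ⟨0, by simp, by simpa [hT] using hε⟩
  set a := adjoint T ∘L T with ha_def
  have hE : Nontrivial E := by
    by_contra h
    rw [not_nontrivial_iff_subsingleton] at h
    exact hT (by ext x; rw [Subsingleton.elim x 0]; simp)
  have ha : IsSelfAdjoint a := adj_comp_self_sa T
  have hpos : (0 : E →L[ℂ] E) ≤ a := by
    rw [ContinuousLinearMap.nonneg_iff_isPositive]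
    refine ⟨ContinuousLinearMap.isSelfAdjoint_iff_isSymmetric.mp ha, fun x => ?_⟩
    rw [ContinuousLinearMap.reApplyInnerSelf_apply, ha_def, ContinuousLinearMap.comp_apply,
      ContinuousLinearMap.adjoint_inner_left]
    exact inner_self_nonneg
  set R := ‖a‖ with hR_def
  have hR : 0 < R := by
    rw [hR_def, ha_def, norm_adjoint_comp_self]
    have : 0 < ‖T‖ := norm_pos_iff.mpr hT
    exact mul_pos this this
  have hspec : ∀ x ∈ spectrum ℝ a, x ∈ Set.Icc 0 R := by
    intro x hx
    refine ⟨spectrum_nonneg_of_nonneg hpos hx, ?_⟩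
    have := spectrum.norm_le_norm_of_mem hx
    rw [Real.norm_eq_abs] at this
    exact (le_abs_self x).trans this
  obtain ⟨n, hn⟩ := pow_bound (show 0 < ε^2/(2*R) by positivity)
  set p : Polynomial ℝ := 1 - Polynomial.C R⁻¹ * Polynomial.X with hp_def
  refine ⟨1 - p^n, ?_, ?_⟩
  · rw [Polynomial.coeff_zero_eq_eval_zero]
    simp [hp_def]
  set w : E →L[ℂ] E := Polynomial.aeval a (p^n) with hw_def
  have hw : IsSelfAdjoint w := aeval_sa a ha _
  have key : T - T ∘L (Polynomial.aeval a (1 - p^n)) = T ∘L w := by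
    rw [map_sub, map_one, comp_sub, ← hw_def, one_def, comp_id, sub_sub_cancel]
  rw [key]
  have hnorm2 : ‖T ∘L w‖ * ‖T ∘L w‖ = ‖Polynomial.aeval a (p^n * Polynomial.X * p^n)‖ := by
    rw [← norm_adjoint_comp_self (T ∘L w)]
    congr 1
    rw [adjoint_comp, ContinuousLinearMap.isSelfAdjoint_iff'.mp hw]
    rw [map_mul, map_mul, Polynomial.aeval_X, ← hw_def]
    ext x
    rfl
  have hbound : ‖Polynomial.aeval a (p^n * Polynomial.X * p^n)‖ ≤ ε^2/2 := by
    rw [← cfc_polynomial _ a ha]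
    refine norm_cfc_le (by positivity) ?_
    intro x hx
    obtain ⟨hx0, hxR⟩ := hspec x hx
    have hux : R⁻¹ * x ∈ Set.Icc (0:ℝ) 1 := by
      constructor
      · positivity
      · rw [inv_mul_le_iff₀ hR]; linarith
    have hu1 : (0:ℝ) ≤ 1 - R⁻¹ * x := by
      rcases hux with ⟨_, h1⟩; linarith
    have hu2 : 1 - R⁻¹ * x ≤ 1 := by
      rcases hux with ⟨h0, _⟩; linarith
    have heval : (p^n * Polynomial.X * p^n).eval x = x * ((1 - R⁻¹*x)^n)^2 := by
      simp [hp_def]; ring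
    rw [heval, Real.norm_eq_abs, abs_of_nonneg (by positivity)]
    have hb := hn (R⁻¹ * x) hux
    calc x * ((1 - R⁻¹*x)^n)^2 ≤ x * (1 - R⁻¹*x)^n := by
          refine mul_le_mul_of_nonneg_left ?_ hx0
          calc ((1 - R⁻¹*x)^n)^2 = (1-R⁻¹*x)^n * (1-R⁻¹*x)^n := sq _
            _ ≤ 1 * (1-R⁻¹*x)^n := by
                refine mul_le_mul_of_nonneg_right (pow_le_one₀ hu1 hu2) (by positivity)
            _ = (1-R⁻¹*x)^n := one_mul _
      _ = R * ((R⁻¹*x) * (1 - R⁻¹*x)^n) := by field_simp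
      _ ≤ R * (ε^2/(2*R)) := mul_le_mul_of_nonneg_left hb hR.le
      _ = ε^2/2 := by field_simp
  nlinarith [norm_nonneg (T ∘L w), hnorm2, hbound]

/-- Pushing a continuous linear map through the closure of a span. -/
lemma span_closure_mem {V W : Type*} [NormedAddCommGroup V] [NormedSpace ℂ V]
    [NormedAddCommGroup W] [NormedSpace ℂ W] (Φ : V →L[ℂ] W) {G : Set V}
    {N : Submodule ℂ W} (hN : IsClosed (N : Set W)) (hgen : ∀ g ∈ G, Φ g ∈ N)
    {x : V} (hx : x ∈ closure (↑(Submodule.span ℂ G) : Set V)) : Φ x ∈ N := by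
  have h1 : ∀ y ∈ Submodule.span ℂ G, Φ y ∈ N := by
    intro y hy
    have hle : Submodule.span ℂ G ≤ N.comap (Φ : V →ₗ[ℂ] W) :=
      Submodule.span_le.mpr (fun g hg => hgen g hg)
    exact hle hy
  have h2 := map_mem_closure Φ.continuous hx h1
  rwa [hN.closure_eq] at h2

/-- The components `Ksig` are closed under adjoints. -/
lemma ksig_star_mem {M : S → Submodule ℂ (E →L[ℂ] F)} {σ : S} {x : F →L[ℂ] F}
    (hx : x ∈ Ksig M σ) : adjoint x ∈ Ksig M σ := by
  simp only [Ksig] at hx ⊢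
  have hspan : ∀ y ∈ Submodule.span ℂ
      {x : F →L[ℂ] F | ∃ m ∈ M σ, ∃ n ∈ M σ, x = m ∘L (adjoint n)},
      adjoint y ∈ (Submodule.span ℂ
      {x : F →L[ℂ] F | ∃ m ∈ M σ, ∃ n ∈ M σ, x = m ∘L (adjoint n)} :
        Set (F →L[ℂ] F)) := by
    intro y hy
    induction hy using Submodule.span_induction with
    | mem z hz =>
      obtain ⟨m, hm, n, hn, rfl⟩ := hz
      refine Submodule.subset_span ⟨n, hn, m, hm, ?_⟩
      rw [adjoint_comp, adjoint_adjoint]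
    | zero => rw [map_zero]; exact Submodule.zero_mem _
    | add u v _ _ hu hv => rw [map_add]; exact Submodule.add_mem _ hu hv
    | smul c u _ hu =>
      rw [LinearIsometryEquiv.map_smulₛₗ]
      exact Submodule.smul_mem _ _ hu
  exact map_mem_closure (ContinuousLinearMap.adjoint :
    (F →L[ℂ] F) ≃ₗᵢ⋆[ℂ] (F →L[ℂ] F)).continuous hx hspan

/-- `p q* ∈ K(M(ρ))` whenever `p ∈ M(ρ)`, `q ∈ M(τ)` and `ρ ≤ τ`. -/
lemma pair_mem {A : S → Submodule ℂ (E →L[ℂ] E)} {M : S → Submodule ℂ (E →L[ℂ] F)}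
    (hAmul : ∀ σ τ, ∀ a ∈ A σ, ∀ b ∈ A τ, a ∘L b ∈ A (σ ⊓ τ))
    (hMA : ∀ σ τ, ∀ m ∈ M σ, ∀ a ∈ A τ, m ∘L a ∈ M (σ ⊓ τ))
    (hMM : ∀ σ τ, ∀ m ∈ M σ, ∀ n ∈ M τ, (adjoint m) ∘L n ∈ A (σ ⊓ τ))
    {ρ τ : S} (hρτ : ρ ⊓ τ = ρ)
    {p q : E →L[ℂ] F} (hp : p ∈ M ρ) (hq : q ∈ M τ) : p ∘L adjoint q ∈ Ksig M ρ := by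
  simp only [Ksig]
  rw [Metric.mem_closure_iff]
  intro ε hε
  set a : E →L[ℂ] E := adjoint p ∘L p with ha_def
  have hsa : IsSelfAdjoint a := adj_comp_self_sa p
  have haA : a ∈ A ρ := by
    have := hMM ρ ρ p hp p hp; rwa [inf_idem] at this
  have hpow : ∀ k : ℕ, p ∘L (a ^ k) ∈ M ρ := by
    intro k; induction k with
    | zero => rw [pow_zero, one_def, comp_id]; exact hp
    | succ k ih =>
      have h2 := hMA ρ ρ (p ∘L a^k) ih a haA
      rw [inf_idem] at h2
      have heq : p ∘L a ^ (k+1) = (p ∘L a^k) ∘L a := by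
        rw [pow_succ]; ext v; rfl
      rwa [heq]
  obtain ⟨h, h0, hlt⟩ := approx p (show 0 < ε / (‖q‖ + 1) by positivity)
  refine ⟨(p ∘L Polynomial.aeval a h) ∘L adjoint q, ?_, ?_⟩
  · rw [Polynomial.aeval_eq_sum_range]
    have expand : (p ∘L ∑ i ∈ Finset.range (h.natDegree + 1), h.coeff i • a ^ i) ∘L adjoint q
        = ∑ i ∈ Finset.range (h.natDegree + 1), h.coeff i • ((p ∘L a ^ i) ∘L adjoint q) := by
      ext v
      simp [ContinuousLinearMap.sum_apply, ContinuousLinearMap.comp_apply]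
    rw [expand]
    refine Submodule.sum_mem _ ?_
    intro k _
    rcases Nat.eq_zero_or_pos k with rfl | hkpos
    · rw [h0]; simp only [zero_smul]; exact Submodule.zero_mem _
    · obtain ⟨k', rfl⟩ : ∃ k', k = k' + 1 := ⟨k - 1, by omega⟩
      rw [← algebraMap_smul ℂ (h.coeff (k'+1))]
      refine Submodule.smul_mem _ _ ?_
      refine Submodule.subset_span ⟨p ∘L a ^ k', hpow k', q ∘L a, ?_, ?_⟩
      · have h2 := hMA τ ρ q hq a haA
        rwa [inf_comm, hρτ] at h2
      · rw [adjoint_comp, ContinuousLinearMap.isSelfAdjoint_iff'.mp hsa, pow_succ]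
        ext v; rfl
  · rw [dist_eq_norm]
    have heq : p ∘L adjoint q - (p ∘L Polynomial.aeval a h) ∘L adjoint q
        = (p - p ∘L Polynomial.aeval a h) ∘L adjoint q := by
      rw [ContinuousLinearMap.sub_comp]
    rw [heq]
    have hadj : ‖(ContinuousLinearMap.adjoint q : F →L[ℂ] E)‖ = ‖q‖ :=
      (ContinuousLinearMap.adjoint : (E →L[ℂ] F) ≃ₗᵢ⋆[ℂ] (F →L[ℂ] E)).norm_map q
    calc ‖(p - p ∘L Polynomial.aeval a h) ∘L adjoint q‖
        ≤ ‖p - p ∘L Polynomial.aeval a h‖ * ‖(ContinuousLinearMap.adjoint q : F →L[ℂ] E)‖ :=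
          opNorm_comp_le _ _
      _ ≤ (ε / (‖q‖+1)) * ‖q‖ := by
          rw [hadj]
          exact mul_le_mul_of_nonneg_right hlt.le (norm_nonneg _)
      _ < ε := by
          have h1 : ε / (‖q‖+1) * ‖q‖ < ε/(‖q‖+1) * (‖q‖+1) := by
            refine mul_lt_mul_of_pos_left (by linarith [norm_nonneg q]) (by positivity)
          rwa [div_mul_cancel₀] at h1
          positivity

end Helpers
set_option maxHeartbeats 1600000

/-- If `M` is an `S`-graded Hilbert module over the `S`-graded C*-algebra `A` (all
realized concretely by operators), then the imprimitivity algebra `K(M)` is `S`-graded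
by the components `K(M)(σ) = K(M(σ))`: these are linearly independent, their total sum
is dense in `K(M)`, and `K(M)(σ) K(M)(τ) ⊆ K(M)(σ∧τ)`. -/
theorem stmt13
    (A : S → Submodule ℂ (E →L[ℂ] E)) (M : S → Submodule ℂ (E →L[ℂ] F))
    (hAcl : ∀ σ, IsClosed (A σ : Set (E →L[ℂ] E)))
    (hAstar : ∀ σ, ∀ a ∈ A σ, adjoint a ∈ A σ)
    (hAmul : ∀ σ τ, ∀ a ∈ A σ, ∀ b ∈ A τ, a ∘L b ∈ A (σ ⊓ τ))
    (hMcl : ∀ σ, IsClosed (M σ : Set (E →L[ℂ] F)))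
    (hMA : ∀ σ τ, ∀ m ∈ M σ, ∀ a ∈ A τ, m ∘L a ∈ M (σ ⊓ τ))
    (hMM : ∀ σ τ, ∀ m ∈ M σ, ∀ n ∈ M τ, (adjoint m) ∘L n ∈ A (σ ⊓ τ))
    (hMind : ∀ t : Finset S, ∀ f : S → (E →L[ℂ] F),
      (∀ σ ∈ t, f σ ∈ M σ) → (∑ σ ∈ t, f σ) = 0 → ∀ σ ∈ t, f σ = 0) :
    (∀ σ τ, ∀ x ∈ Ksig M σ, ∀ y ∈ Ksig M τ, x ∘L y ∈ Ksig M (σ ⊓ τ)) ∧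
    (∀ t : Finset S, ∀ f : S → (F →L[ℂ] F),
      (∀ σ ∈ t, f σ ∈ Ksig M σ) → (∑ σ ∈ t, f σ) = 0 → ∀ σ ∈ t, f σ = 0) ∧
    closure (↑(Submodule.span ℂ (⋃ σ : S, Ksig M σ)) : Set (F →L[ℂ] F)) = Kall M := by
  classical
  letI : DecidableEq S := Classical.decEq S
  have part1 : ∀ σ τ, ∀ x ∈ Ksig M σ, ∀ y ∈ Ksig M τ, x ∘L y ∈ Ksig M (σ ⊓ τ) := by
    intro σ τ x hx y hy
    set Wρ := (Submodule.span ℂ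
      {z : F →L[ℂ] F | ∃ m ∈ M (σ ⊓ τ), ∃ n ∈ M (σ ⊓ τ), z = m ∘L (adjoint n)}).topologicalClosure
      with hWρ
    have hWcl : IsClosed (Wρ : Set (F →L[ℂ] F)) := Submodule.isClosed_topologicalClosure _
    have hWcoe : (Wρ : Set (F →L[ℂ] F)) = Ksig M (σ ⊓ τ) := rfl
    have step1 : ∀ g ∈ {z : F →L[ℂ] F | ∃ m ∈ M σ, ∃ n ∈ M σ, z = m ∘L (adjoint n)},
        ∀ z, z ∈ Ksig M τ → g ∘L z ∈ Wρ := by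
      rintro g ⟨m, hm, n, hn, rfl⟩ z hz
      have hgen : ∀ g' ∈ {w : F →L[ℂ] F | ∃ p' ∈ M τ, ∃ q' ∈ M τ, w = p' ∘L (adjoint q')},
          (compL ℂ F F F (m ∘L adjoint n)) g' ∈ Wρ := by
        rintro g' ⟨p', hp', q', hq', rfl⟩
        have h1 : adjoint n ∘L p' ∈ A (σ ⊓ τ) := hMM σ τ n hn p' hp'
        have h2 : m ∘L (adjoint n ∘L p') ∈ M (σ ⊓ τ) := by
          have := hMA σ (σ ⊓ τ) m hm _ h1
          rwa [← inf_assoc, inf_idem] at this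
        have h3 : (m ∘L (adjoint n ∘L p')) ∘L adjoint q' ∈ Ksig M (σ ⊓ τ) :=
          pair_mem hAmul hMA hMM (by rw [inf_assoc, inf_idem]) h2 hq'
        have heq : (compL ℂ F F F (m ∘L adjoint n)) (p' ∘L adjoint q')
            = (m ∘L (adjoint n ∘L p')) ∘L adjoint q' := by ext v; rfl
        rw [heq]
        exact h3
      exact span_closure_mem (compL ℂ F F F (m ∘L adjoint n)) hWcl hgen hz
    have step2 := span_closure_mem ((compL ℂ F F F).flip y) hWcl
      (fun g hg => step1 g hg y hy) hx
    have : x ∘L y ∈ (Wρ : Set (F →L[ℂ] F)) := step2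
    rwa [hWcoe] at this
  have hcomp_mem : ∀ {σ τ : S} {x : F →L[ℂ] F}, x ∈ Ksig M σ →
      ∀ {pp : E →L[ℂ] F}, pp ∈ M τ → x ∘L pp ∈ M (σ ⊓ τ) := by
    intro σ τ x hx pp hpp
    have hgen : ∀ g ∈ {z : F →L[ℂ] F | ∃ m ∈ M σ, ∃ n ∈ M σ, z = m ∘L (adjoint n)},
        ((compL ℂ E F F).flip pp) g ∈ M (σ ⊓ τ) := by
      rintro g ⟨m, hm, n, hn, rfl⟩
      have h1 : adjoint n ∘L pp ∈ A (σ ⊓ τ) := hMM σ τ n hn pp hpp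
      have h2 : m ∘L (adjoint n ∘L pp) ∈ M (σ ⊓ τ) := by
        have := hMA σ (σ ⊓ τ) m hm _ h1
        rwa [← inf_assoc, inf_idem] at this
      have heq : ((compL ℂ E F F).flip pp) (m ∘L adjoint n) = m ∘L (adjoint n ∘L pp) := by
        ext v; rfl
      rw [heq]; exact h2
    have := span_closure_mem ((compL ℂ E F F).flip pp) (hMcl _) hgen hx
    simpa using this
  have hzero : ∀ σ (x : F →L[ℂ] F), x ∈ Ksig M σ → (∀ pp ∈ M σ, x ∘L pp = 0) → x = 0 := by
    intro σ x hx hvan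
    have hstep : ∀ y, y ∈ Ksig M σ → x ∘L y = 0 := by
      intro y hy
      have hbotcl : IsClosed ((⊥ : Submodule ℂ (F →L[ℂ] F)) : Set (F →L[ℂ] F)) := by
        rw [Submodule.bot_coe]; exact isClosed_singleton
      have hgen : ∀ g ∈ {z : F →L[ℂ] F | ∃ m ∈ M σ, ∃ n ∈ M σ, z = m ∘L (adjoint n)},
          (compL ℂ F F F x) g ∈ (⊥ : Submodule ℂ (F →L[ℂ] F)) := by
        rintro g ⟨m, hm, n, hn, rfl⟩
        rw [Submodule.mem_bot]
        have heq : (compL ℂ F F F x) (m ∘L adjoint n) = (x ∘L m) ∘L adjoint n := by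
          ext v; rfl
        rw [heq, hvan m hm, zero_comp]
      have := span_closure_mem (compL ℂ F F F x) hbotcl hgen hy
      rw [Submodule.mem_bot] at this
      simpa using this
    have hxadj : x ∘L adjoint x = 0 := hstep _ (ksig_star_mem hx)
    have h1 : ‖adjoint x‖ * ‖adjoint x‖ = 0 := by
      rw [← norm_adjoint_comp_self (adjoint x), adjoint_adjoint, hxadj, norm_zero]
    have h2 : ‖x‖ = 0 := by
      rw [← (ContinuousLinearMap.adjoint : (F →L[ℂ] F) ≃ₗᵢ⋆[ℂ] (F →L[ℂ] F)).norm_map x]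
      exact mul_self_eq_zero.mp h1
    exact norm_eq_zero.mp h2
  have part2 : ∀ t : Finset S, ∀ f : S → (F →L[ℂ] F),
      (∀ σ ∈ t, f σ ∈ Ksig M σ) → (∑ σ ∈ t, f σ) = 0 → ∀ σ ∈ t, f σ = 0 := by
    intro t
    induction t using Finset.strongInductionOn with
    | _ t ih =>
      intro f hf hsum
      rcases Finset.eq_empty_or_nonempty t with rfl | hne
      · intro σ hσ; exact absurd hσ (Finset.notMem_empty _)
      obtain ⟨σm, hσm, hmax⟩ := t.exists_maximal hne
      have hfσm : f σm = 0 := by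
        refine hzero σm (f σm) (hf σm hσm) ?_
        intro pp hpp
        have hg1 : ∀ μ ∈ t.image (· ⊓ σm),
            (∑ ρ ∈ t.filter (fun ρ => ρ ⊓ σm = μ), f ρ ∘L pp) ∈ M μ := by
          intro μ hμ
          refine Submodule.sum_mem _ ?_
          intro ρ hρ
          rw [Finset.mem_filter] at hρ
          have := hcomp_mem (hf ρ hρ.1) hpp
          rwa [hρ.2] at this
        have hg2 : ∑ μ ∈ t.image (· ⊓ σm),
            ∑ ρ ∈ t.filter (fun ρ => ρ ⊓ σm = μ), f ρ ∘L pp = 0 := by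
          rw [Finset.sum_fiberwise_of_maps_to (fun ρ hρ => Finset.mem_image_of_mem _ hρ)]
          have hsc : ∑ ρ ∈ t, f ρ ∘L pp = (∑ ρ ∈ t, f ρ) ∘L pp := by
            ext v; simp [ContinuousLinearMap.sum_apply]
          rw [hsc, hsum, zero_comp]
        have hmem : σm ∈ t.image (· ⊓ σm) :=
          Finset.mem_image.mpr ⟨σm, hσm, inf_idem σm⟩
        have hgσm : ∑ ρ ∈ t.filter (fun ρ => ρ ⊓ σm = σm), f ρ ∘L pp = 0 :=
          hMind (t.image (· ⊓ σm))
            (fun μ => ∑ ρ ∈ t.filter (fun ρ => ρ ⊓ σm = μ), f ρ ∘L pp) hg1 hg2 σm hmem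
        have hfilter : t.filter (fun ρ => ρ ⊓ σm = σm) = {σm} := by
          ext ρ
          simp only [Finset.mem_filter, Finset.mem_singleton]
          constructor
          · rintro ⟨hρt, hρeq⟩
            have hle : σm ≤ ρ := inf_eq_right.mp hρeq
            exact le_antisymm (hmax hρt hle) hle
          · rintro rfl; exact ⟨hσm, inf_idem _⟩
        rw [hfilter, Finset.sum_singleton] at hgσm
        exact hgσm
      have hrest := ih (t.erase σm) (Finset.erase_ssubset hσm) f
        (fun σ hσ => hf σ (Finset.mem_of_mem_erase hσ))
        (by rw [Finset.sum_erase _ hfσm]; exact hsum)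
      intro σ hσ
      rcases eq_or_ne σ σm with rfl | hneq
      · exact hfσm
      · exact hrest σ (Finset.mem_erase.mpr ⟨hneq, hσ⟩)
  have part3 : closure (↑(Submodule.span ℂ (⋃ σ : S, Ksig M σ)) : Set (F →L[ℂ] F))
      = Kall M := by
    apply Set.Subset.antisymm
    · refine closure_minimal ?_ isClosed_closure
      have hU : (⋃ σ : S, Ksig M σ) ⊆
          ↑((Submodule.span ℂ
            {x : F →L[ℂ] F | ∃ σ τ, ∃ m ∈ M σ, ∃ n ∈ M τ,
              x = m ∘L (adjoint n)}).topologicalClosure) := by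
        intro x hx
        rw [Set.mem_iUnion] at hx
        obtain ⟨σ, hσ⟩ := hx
        have hmono : Submodule.span ℂ
            {z : F →L[ℂ] F | ∃ m ∈ M σ, ∃ n ∈ M σ, z = m ∘L (adjoint n)} ≤
            Submodule.span ℂ {x : F →L[ℂ] F | ∃ σ' τ', ∃ m ∈ M σ', ∃ n ∈ M τ',
              x = m ∘L (adjoint n)} := by
          refine Submodule.span_mono ?_
          rintro g ⟨m, hm, n, hn, rfl⟩
          exact ⟨σ, σ, m, hm, n, hn, rfl⟩
        have hcl := closure_mono (show (↑(Submodule.span ℂ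
            {z : F →L[ℂ] F | ∃ m ∈ M σ, ∃ n ∈ M σ, z = m ∘L (adjoint n)}) : Set (F →L[ℂ] F)) ⊆
            ↑(Submodule.span ℂ {x : F →L[ℂ] F | ∃ σ' τ', ∃ m ∈ M σ', ∃ n ∈ M τ',
              x = m ∘L (adjoint n)}) from hmono)
        exact hcl hσ
      intro x hx
      exact Submodule.span_le.mpr hU hx
    · refine closure_minimal ?_ isClosed_closure
      have hgen : {x : F →L[ℂ] F | ∃ σ τ, ∃ m ∈ M σ, ∃ n ∈ M τ, x = m ∘L (adjoint n)} ⊆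
          ↑((Submodule.span ℂ (⋃ σ : S, Ksig M σ)).topologicalClosure) := by
        rintro g ⟨σ, τ, m, hm, n, hn, rfl⟩
        show m ∘L adjoint n ∈
          closure (↑(Submodule.span ℂ (⋃ σ : S, Ksig M σ)) : Set (F →L[ℂ] F))
        rw [Metric.mem_closure_iff]
        intro ε hε
        set a : E →L[ℂ] E := adjoint n ∘L n with ha_def
        have hsa : IsSelfAdjoint a := adj_comp_self_sa n
        have haA : a ∈ A τ := by
          have := hMM τ τ n hn n hn; rwa [inf_idem] at this
        have hpow : ∀ k : ℕ, m ∘L a ^ (k+1) ∈ M (σ ⊓ τ) := by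
          intro k; induction k with
          | zero => rw [pow_one]; exact hMA σ τ m hm a haA
          | succ k ihk =>
            have h2 := hMA (σ ⊓ τ) τ _ ihk a haA
            rw [inf_assoc, inf_idem] at h2
            have heq : m ∘L a ^ (k+2) = (m ∘L a ^ (k+1)) ∘L a := by
              rw [pow_succ]; ext v; rfl
            rwa [heq]
        obtain ⟨h, h0, hlt⟩ := approx n (show 0 < ε / (‖m‖ + 1) by positivity)
        refine ⟨(m ∘L Polynomial.aeval a h) ∘L adjoint n, ?_, ?_⟩
        · rw [Polynomial.aeval_eq_sum_range]
          have expand : (m ∘L ∑ i ∈ Finset.range (h.natDegree + 1), h.coeff i • a ^ i) ∘L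
              adjoint n
              = ∑ i ∈ Finset.range (h.natDegree + 1),
                  h.coeff i • ((m ∘L a ^ i) ∘L adjoint n) := by
            ext v
            simp [ContinuousLinearMap.sum_apply, ContinuousLinearMap.comp_apply]
          rw [expand]
          refine Submodule.sum_mem _ ?_
          intro k _
          rcases Nat.eq_zero_or_pos k with rfl | hkpos
          · rw [h0]; simp only [zero_smul]; exact Submodule.zero_mem _
          · obtain ⟨k', rfl⟩ : ∃ k', k = k' + 1 := ⟨k - 1, by omega⟩
            rw [← algebraMap_smul ℂ (h.coeff (k'+1))]
            refine Submodule.smul_mem _ _ ?_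
            refine Submodule.subset_span ?_
            refine Set.mem_iUnion.mpr ⟨σ ⊓ τ, ?_⟩
            exact pair_mem hAmul hMA hMM (by rw [inf_assoc, inf_idem]) (hpow k') hn
        · rw [dist_eq_norm]
          have hsa2 : IsSelfAdjoint (Polynomial.aeval a h) := aeval_sa a hsa h
          have e1 : adjoint (n - n ∘L Polynomial.aeval a h)
              = adjoint n - Polynomial.aeval a h ∘L adjoint n := by
            rw [map_sub, adjoint_comp, ContinuousLinearMap.isSelfAdjoint_iff'.mp hsa2]
          have key : m ∘L adjoint n - (m ∘L Polynomial.aeval a h) ∘L adjoint n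
              = m ∘L adjoint (n - n ∘L Polynomial.aeval a h) := by
            rw [e1, comp_sub]
            rfl
          rw [key]
          calc ‖m ∘L adjoint (n - n ∘L Polynomial.aeval a h)‖
              ≤ ‖m‖ * ‖adjoint (n - n ∘L Polynomial.aeval a h)‖ := opNorm_comp_le _ _
            _ = ‖m‖ * ‖n - n ∘L Polynomial.aeval a h‖ := by
                rw [(ContinuousLinearMap.adjoint :
                  (E →L[ℂ] F) ≃ₗᵢ⋆[ℂ] (F →L[ℂ] E)).norm_map]
            _ ≤ ‖m‖ * (ε / (‖m‖+1)) := mul_le_mul_of_nonneg_left hlt.le (norm_nonneg m)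
            _ < ε := by
                have hlt2 : ‖m‖ * (ε/(‖m‖+1)) < (‖m‖+1) * (ε/(‖m‖+1)) :=
                  mul_lt_mul_of_pos_right (by linarith [norm_nonneg m]) (by positivity)
                have he : (‖m‖+1) * (ε/(‖m‖+1)) = ε := by field_simp
                rwa [he] at hlt2
      intro x hx
      exact Submodule.span_le.mpr hgen hx
  exact ⟨part1, part2, part3⟩
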